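/- arXiv:2304.11451 — 2 statements merged into one kernel-verified Lean document; each statement's English description precedes it below -/
import Mathlib

section
/- Let P be a Sylow p-subgroup of a finite group G. If P satisfies the partial Π-property in G, then G is p-soluble. -/
open Subgroup

/-- `L/K` is a chief factor of `G`. -/
def IsChiefFactor (G : Type*) [Group G] (K L : Subgroup G) : Prop :=
  K.Normal ∧ L.Normal ∧ K < L ∧
    ∀ N : Subgroup G, N.Normal → K ≤ N → N ≤ L → N = K ∨ N = L

/-- `σ` is a chief series of `G`. -/
def IsChiefSeries {G : Type*} [Group G] {n : ℕ} (σ : Fin (n + 1) → Subgroup G) : Prop :=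
  σ 0 = ⊥ ∧ σ (Fin.last n) = ⊤ ∧
    ∀ i : Fin n, IsChiefFactor G (σ i.castSucc) (σ i.succ)

/-- `H` satisfies the partial Π-property in `G`: there is a chief series of `G` such that for
each chief factor `Gᵢ/Gᵢ₋₁`, the index `|G/Gᵢ₋₁ : N_{G/Gᵢ₋₁}(HGᵢ₋₁/Gᵢ₋₁ ∩ Gᵢ/Gᵢ₋₁)|`
(which equals `|G : N_G(HGᵢ₋₁ ∩ Gᵢ)|`) is a `π(HGᵢ₋₁/Gᵢ₋₁ ∩ Gᵢ/Gᵢ₋₁)`-number. -/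
def PartialPiProperty {G : Type*} [Group G] (H : Subgroup G) : Prop :=
  ∃ (n : ℕ) (σ : Fin (n + 1) → Subgroup G), IsChiefSeries σ ∧
    ∀ i : Fin n, ∀ q : ℕ, q.Prime →
      q ∣ (normalizer (((H ⊔ σ i.castSucc) ⊓ σ i.succ : Subgroup G) : Set G)).index →
      q ∣ (σ i.castSucc).relIndex ((H ⊔ σ i.castSucc) ⊓ σ i.succ)

/-- `G` is `p`-soluble: every chief factor is a `p`-group or a `p'`-group. -/
def IsPSoluble (p : ℕ) (G : Type*) [Group G] : Prop :=
  ∀ K L : Subgroup G, IsChiefFactor G K L →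
    (∃ k : ℕ, K.relIndex L = p ^ k) ∨ ¬ p ∣ K.relIndex L

/-- `G` has `p`-length at most one: there is a normal series `1 ≤ N ≤ M ≤ G` with `N` a
`p'`-group, `M/N` a `p`-group and `G/M` a `p'`-group. -/
def PLengthLEOne (p : ℕ) (G : Type*) [Group G] : Prop :=
  ∃ N M : Subgroup G, N.Normal ∧ M.Normal ∧ N ≤ M ∧
    ¬ p ∣ Nat.card N ∧ (∃ k : ℕ, N.relIndex M = p ^ k) ∧ ¬ p ∣ M.index

/-!
Let `L/K` be a factor of the given chief series and `H = PK ∩ L`. Since `P` normalizes `H`, the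
index `|G : N_G(H)|` is prime to `p`, while by hypothesis its prime divisors divide `|H : K|`, a
power of `p`. So `H ⊴ G`, and minimality of `L/K` leaves `H = K` (then `P ∩ L ≤ K` and `L/K` is a
`p'`-group) or `H = L` (then `L/K` is a `p`-group). An arbitrary chief factor `L/K` of `G` has order
dividing that of a factor of the series: take the first term `Gᵢ` with `(Gᵢ ∩ L)K = L`.
-/

namespace Subgroup

variable {G : Type*} [Group G]

theorem relIndex_dvd_index_of_normal_right (H K : Subgroup G) [K.Normal] [K.FiniteIndex] :
    H.relIndex K ∣ H.index := by
  have key : H.relIndex K * K.index = K.relIndex H * H.index := calc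
    _ = (H ⊓ K).index := by simpa using relIndex_inf_mul_relIndex H K ⊤
    _ = K.relIndex H * H.index := by rw [← inf_relIndex_left, relIndex_mul_index inf_le_left]
  refine Nat.dvd_of_mul_dvd_mul_right (Nat.pos_of_ne_zero (FiniteIndex.index_ne_zero : K.index ≠ 0)) ?_
  rw [key, mul_comm H.index]
  exact mul_dvd_mul_right (relIndex_dvd_index_of_normal K H) _

theorem relIndex_dvd_relIndex_of_le_of_normal {A H K : Subgroup G} [A.Normal] (hHK : H ≤ K) :
    A.relIndex H ∣ A.relIndex K := by
  rw [← relIndex_sup_right H A, ← relIndex_sup_right K A]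
  exact Dvd.intro _ (relIndex_mul_relIndex _ _ _ le_sup_right (sup_le_sup_right hHK A))

theorem le_normalizer_sup_inf (H K L : Subgroup G) [L.Normal] :
    H ≤ normalizer (((H ⊔ K) ⊓ L : Subgroup G) : Set G) :=
  le_trans (le_inf (le_sup_left.trans le_normalizer) le_normalizer_of_normal)
    inf_normalizer_le_normalizer_inf

theorem relIndex_dvd_relIndex_of_inf_le_of_sup_eq {A B K L : Subgroup G} [A.Normal] [K.Normal]
    (hA : A ⊓ L ≤ K) (hB : B ⊓ L ⊔ K = L) : K.relIndex L ∣ A.relIndex B := calc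
  K.relIndex L = K.relIndex (B ⊓ L) := by rw [← relIndex_sup_right (B ⊓ L) K, hB]
  _ ∣ A.relIndex (B ⊓ L) := by
    rw [← inf_relIndex_right A]
    exact relIndex_dvd_of_le_left _ ((inf_le_inf_left A inf_le_right).trans hA)
  _ ∣ A.relIndex B := relIndex_dvd_relIndex_of_le_of_normal inf_le_left

end Subgroup

open Subgroup

theorem IsPGroup.exists_relIndex_eq_pow_of_le_sup {p : ℕ} [hp : Fact p.Prime] {G : Type*} [Group G]
    {P K H : Subgroup G} [K.Normal] [Finite P] (hP : IsPGroup p P) (hH : H ≤ P ⊔ K) :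
    ∃ k, K.relIndex H = p ^ k := by
  obtain ⟨m, hm⟩ := hP.index (K.subgroupOf P)
  have hdvd : K.relIndex H ∣ p ^ m := by
    rw [← hm, ← relIndex, ← relIndex_sup_right P K]
    exact relIndex_dvd_relIndex_of_le_of_normal hH
  obtain ⟨k, -, hk⟩ := (Nat.dvd_prime_pow hp.out).mp hdvd
  exact ⟨k, hk⟩

theorem IsChiefSeries.exists_relIndex_dvd {G : Type*} [Group G] {n : ℕ}
    {σ : Fin (n + 1) → Subgroup G} (hσ : IsChiefSeries σ) {K L : Subgroup G}
    (hKL : IsChiefFactor G K L) : ∃ i : Fin n, K.relIndex L ∣ (σ i.castSucc).relIndex (σ i.succ) := by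
  obtain ⟨h0, hlast, hchief⟩ := hσ
  obtain ⟨hK, hL, hlt, hmin⟩ := hKL
  have hnormal (j : Fin (n + 1)) : (σ j).Normal :=
    Fin.cases (h0 ▸ normal_bot) (fun i ↦ (hchief i).2.1) j
  have hdich (j : Fin (n + 1)) : σ j ⊓ L ⊔ K = K ∨ σ j ⊓ L ⊔ K = L :=
    hmin _ (by have := hnormal j; infer_instance) le_sup_right (sup_le inf_le_right hlt.le)
  obtain ⟨i, hi, hi'⟩ : ∃ i : Fin n, σ i.castSucc ⊓ L ⊔ K ≠ L ∧ σ i.succ ⊓ L ⊔ K = L := by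
    by_contra! hstuck
    have hne (j : Fin (n + 1)) : σ j ⊓ L ⊔ K ≠ L :=
      Fin.induction (by simpa [h0] using hlt.ne) hstuck j
    exact hne (Fin.last n) (by simpa [hlast] using hlt.le)
  have := (hchief i).1
  exact ⟨i, relIndex_dvd_relIndex_of_inf_le_of_sup_eq
    (le_sup_left.trans ((hdich _).resolve_right hi).le) hi'⟩

section ChiefFactor

variable {p : ℕ} [Fact p.Prime] {G : Type*} [Group G] [Finite G]

theorem Sylow.normal_sup_inf_of_prime_dvd_index_normalizer (P : Sylow p G) {K L : Subgroup G}
    [K.Normal] [L.Normal]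
    (hP : ∀ q : ℕ, q.Prime → q ∣ (normalizer (((P ⊔ K) ⊓ L : Subgroup G) : Set G)).index →
      q ∣ K.relIndex ((P ⊔ K) ⊓ L)) :
    ((P ⊔ K) ⊓ L : Subgroup G).Normal := by
  obtain ⟨k, hk⟩ := P.2.exists_relIndex_eq_pow_of_le_sup (K := K) (inf_le_left (b := L))
  rw [← normalizer_eq_top_iff, ← index_eq_one, Nat.eq_one_iff_not_exists_prime_dvd]
  intro q hq hqN
  have hqp : q = p := (Nat.prime_dvd_prime_iff_eq hq Fact.out).mp
    (hq.dvd_of_dvd_pow (hk ▸ hP q hq hqN))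
  -- `P` normalizes `(P ⊔ K) ⊓ L`, so this index is prime to `p`
  exact P.not_dvd_index (hqp ▸ hqN |>.trans (index_dvd_of_le (le_normalizer_sup_inf _ K L)))

theorem IsChiefFactor.exists_relIndex_eq_pow_or_not_dvd (P : Sylow p G) {K L : Subgroup G}
    (hKL : IsChiefFactor G K L)
    (hP : ∀ q : ℕ, q.Prime → q ∣ (normalizer (((P ⊔ K) ⊓ L : Subgroup G) : Set G)).index →
      q ∣ K.relIndex ((P ⊔ K) ⊓ L)) :
    (∃ k : ℕ, K.relIndex L = p ^ k) ∨ ¬ p ∣ K.relIndex L := by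
  obtain ⟨hK, hL, hlt, hmin⟩ := hKL
  have hnormal := P.normal_sup_inf_of_prime_dvd_index_normalizer hP
  rcases hmin _ hnormal (le_inf le_sup_right hlt.le) inf_le_right with hbot | htop
  · right
    rw [← hbot, inf_relIndex_right]
    exact fun hdvd ↦ P.not_dvd_index <| hdvd.trans <|
      (relIndex_dvd_index_of_normal_right _ L).trans (index_dvd_of_le le_sup_left)
  · left
    rw [← htop]
    exact P.2.exists_relIndex_eq_pow_of_le_sup inf_le_left

end ChiefFactor

theorem stmt2 {p : ℕ} (hp : p.Prime) {G : Type*} [Group G] [Finite G]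
    (P : Sylow p G) (h : PartialPiProperty (P : Subgroup G)) :
    IsPSoluble p G := by
  have := Fact.mk hp
  obtain ⟨n, σ, hσ, hpartial⟩ := h
  intro K L hKL
  obtain ⟨i, hdvd⟩ := hσ.exists_relIndex_dvd hKL
  rcases (hσ.2.2 i).exists_relIndex_eq_pow_or_not_dvd P (hpartial i) with ⟨k, hk⟩ | hndvd
  · obtain ⟨j, -, hj⟩ := (Nat.dvd_prime_pow hp).mp (hk ▸ hdvd)
    exact .inl ⟨j, hj⟩
  · exact .inr fun hpdvd ↦ hndvd (hpdvd.trans hdvd)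
end

section
/- Let H be a subgroup of a finite group G and N a normal subgroup of G such that either N ≤ H, or gcd(|H|, |N|) = 1. If H satisfies the partial Π-property in G, then HN/N satisfies the partial Π-property in G/N. -/
open Subgroup

/-!
Push a chief series of `G` witnessing the partial Π-property of `H` through `G → G/N`. A chief
factor `L/K` either collapses (`L ≤ KN`) or maps onto a chief factor `L̄/K̄` of `G/N`; in the
latter case `KN ∩ L = K`, so the index `|HK ∩ L : K|` is unchanged, while the normalizer index
can only drop. The hypothesis on `N` gives `H ∩ LN ≤ (H ∩ L)N` (in the coprime case because
`|H ∩ LN : H ∩ L|` divides both `|H|` and `|N|`), which by Dedekind's law makes the image of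
`HK ∩ L` equal to `H̄K̄ ∩ L̄`. Deleting the collapsed steps leaves the required chief series
of `G/N`.
-/

namespace Subgroup

variable {G Q : Type*} [Group G] [Group Q]

theorem map_inf_comap (f : G →* Q) (A : Subgroup G) (B : Subgroup Q) :
    (A ⊓ B.comap f).map f = A.map f ⊓ B :=
  SetLike.coe_injective (by simp [Set.image_inter_preimage])

theorem inf_sup_eq_inf_sup_of_le {A B N : Subgroup G} [N.Normal] (h : N ≤ A) :
    A ⊓ (B ⊔ N) = A ⊓ B ⊔ N :=
  SetLike.coe_injective (by rw [coe_inf, mul_normal, mul_normal, inf_mul_assoc _ _ _ h])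

theorem inf_sup_le_of_coprime {H L N : Subgroup G} [L.Normal]
    (hco : (Nat.card H).Coprime (Nat.card N)) : H ⊓ (L ⊔ N) ≤ L := by
  set X := H ⊓ (L ⊔ N)
  have hdvd_H : L.relIndex X ∣ Nat.card H :=
    (relIndex_dvd_card L X).trans (card_dvd_of_le inf_le_left)
  have hdvd_N : L.relIndex X ∣ Nat.card N := by
    have hX : L ⊔ X ≤ L ⊔ N := sup_le le_sup_left inf_le_right
    calc L.relIndex X = L.relIndex (L ⊔ X) := (relIndex_sup_left X L).symm
      _ ∣ L.relIndex (L ⊔ N) := Dvd.intro _ (relIndex_mul_relIndex _ _ _ le_sup_left hX)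
      _ = L.relIndex N := relIndex_sup_left N L
      _ ∣ Nat.card N := relIndex_dvd_card L N
  have hone : L.relIndex X = 1 := Nat.eq_one_of_dvd_coprimes hco hdvd_H hdvd_N
  exact relIndex_eq_one.mp hone

theorem inf_sup_le_inf_sup_of_le_or_coprime {H L N : Subgroup G} [L.Normal] [N.Normal]
    (hcond : N ≤ H ∨ (Nat.card H).Coprime (Nat.card N)) : H ⊓ (L ⊔ N) ≤ H ⊓ L ⊔ N := by
  rcases hcond with hNH | hco
  · exact (inf_sup_eq_inf_sup_of_le hNH).le
  · exact (le_inf inf_le_left (inf_sup_le_of_coprime hco)).trans le_sup_left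

theorem index_normalizer_map_dvd {f : G →* Q} (hf : Function.Surjective f) (X : Subgroup G) :
    (normalizer ((X.map f : Subgroup Q) : Set Q)).index ∣ (normalizer (X : Set G)).index :=
  (index_dvd_of_le (le_normalizer_map f)).trans (index_map_dvd _ hf)

theorem map_sup_inf_map {f : G →* Q} {H K L : Subgroup G} [K.Normal] (hKL : K ≤ L)
    (hH : H ⊓ (L ⊔ f.ker) ≤ H ⊓ L ⊔ f.ker) :
    (H.map f ⊔ K.map f) ⊓ L.map f = ((H ⊔ K) ⊓ L).map f := by
  rw [← map_sup, ← map_inf_comap, comap_map_eq]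
  refine le_antisymm (map_le_map_iff'.mpr (sup_le ?_ le_sup_right))
    (map_mono (inf_le_inf_left _ le_sup_left))
  calc (H ⊔ K) ⊓ (L ⊔ f.ker) = (L ⊔ f.ker) ⊓ H ⊔ K := by
        rw [inf_comm, inf_sup_eq_inf_sup_of_le (hKL.trans le_sup_left)]
    _ ≤ H ⊓ L ⊔ f.ker ⊔ K := sup_le_sup_right (inf_comm (L ⊔ f.ker) H ▸ hH) K
    _ ≤ (H ⊔ K) ⊓ L ⊔ f.ker := by
        refine sup_le (sup_le_sup_right (inf_le_inf_right _ le_sup_left) _) ?_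
        exact le_sup_of_le_left (le_inf le_sup_right hKL)

end Subgroup

section ChiefFactor

variable {G Q : Type*} [Group G] [Group Q] {f : G →* Q} {K L : Subgroup G}

theorem IsChiefFactor.sup_ker_inf_eq (h : IsChiefFactor G K L) (hKL : K.map f ≠ L.map f) :
    (K ⊔ f.ker) ⊓ L = K := by
  obtain ⟨hK, hL, hlt, hmax⟩ := h
  rcases hmax ((K ⊔ f.ker) ⊓ L) inferInstance (le_inf le_sup_left hlt.le) inf_le_right
    with hK' | hL'
  · exact hK'
  · refine absurd (le_antisymm (map_mono hlt.le) ?_) hKL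
    exact map_le_map_iff'.mpr (sup_le (hL' ▸ inf_le_left) le_sup_right)

theorem IsChiefFactor.relIndex_map (h : IsChiefFactor G K L) (hKL : K.map f ≠ L.map f)
    {X : Subgroup G} (hKX : K ≤ X) (hXL : X ≤ L) :
    (K.map f).relIndex (X.map f) = K.relIndex X := by
  have hX : (K ⊔ f.ker) ⊓ X = K :=
    le_antisymm ((inf_le_inf_left _ hXL).trans (h.sup_ker_inf_eq hKL).le) (le_inf le_sup_left hKX)
  rw [← relIndex_comap, comap_map_eq, ← inf_relIndex_right, hX]

theorem IsChiefFactor.map (hf : Function.Surjective f) (h : IsChiefFactor G K L)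
    (hKL : K.map f ≠ L.map f) : IsChiefFactor Q (K.map f) (L.map f) := by
  obtain ⟨hK, hL, hlt, hmax⟩ := h
  refine ⟨hK.map f hf, hL.map f hf, lt_of_le_of_ne (map_mono hlt.le) hKL, ?_⟩
  intro M hM hKM hML
  have hM : M = (M.comap f ⊓ L).map f := by
    rw [inf_comm, map_inf_comap, inf_eq_right.mpr hML]
  rcases hmax (M.comap f ⊓ L) inferInstance
    (le_inf ((le_comap_map f K).trans (comap_mono hKM)) hlt.le) inf_le_right with h' | h'
  · exact Or.inl (hM.trans (congrArg _ h'))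
  · exact Or.inr (hM.trans (congrArg _ h'))

end ChiefFactor

section PiProperty

variable {G Q : Type*} [Group G] [Group Q]

def IsPiChiefFactor (H K L : Subgroup G) : Prop :=
  IsChiefFactor G K L ∧ ∀ q : ℕ, q.Prime →
    q ∣ (normalizer (((H ⊔ K) ⊓ L : Subgroup G) : Set G)).index →
    q ∣ K.relIndex ((H ⊔ K) ⊓ L)

theorem IsPiChiefFactor.map {f : G →* Q} (hf : Function.Surjective f) {H K L : Subgroup G}
    (hH : H ⊓ (L ⊔ f.ker) ≤ H ⊓ L ⊔ f.ker) (h : IsPiChiefFactor H K L)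
    (hKL : K.map f ≠ L.map f) : IsPiChiefFactor (H.map f) (K.map f) (L.map f) := by
  obtain ⟨hc, hindex⟩ := h
  have ⟨hK, _, hlt, _⟩ := hc
  refine ⟨hc.map hf hKL, fun q hq hdvd => ?_⟩
  rw [map_sup_inf_map hlt.le hH] at hdvd ⊢
  rw [hc.relIndex_map hKL (le_inf le_sup_right hlt.le) inf_le_right]
  exact hindex q hq (hdvd.trans (index_normalizer_map_dvd hf _))

theorem exists_piSeries_of_stutteringSeries (H : Subgroup G) :
    ∀ {n : ℕ} (τ : Fin (n + 1) → Subgroup G), τ 0 = ⊥ →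
      (∀ i : Fin n, τ i.succ = τ i.castSucc ∨ IsPiChiefFactor H (τ i.castSucc) (τ i.succ)) →
      ∃ (k : ℕ) (σ : Fin (k + 1) → Subgroup G), σ 0 = ⊥ ∧ σ (Fin.last k) = τ (Fin.last n) ∧
        ∀ i : Fin k, IsPiChiefFactor H (σ i.castSucc) (σ i.succ)
  | 0, τ, h0, _ => ⟨0, τ, h0, rfl, finZeroElim⟩
  | n + 1, τ, h0, hstep => by
    obtain ⟨k, σ, hσ0, hσk, hσ⟩ := exists_piSeries_of_stutteringSeries H (Fin.init τ) h0
      fun i => by simpa only [Fin.init, Fin.succ_castSucc] using hstep i.castSucc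
    rcases hstep (Fin.last n) with heq | hpi
    · exact ⟨k, σ, hσ0, hσk.trans (heq.symm.trans (congrArg τ (Fin.succ_last n))), hσ⟩
    · refine ⟨k + 1, Fin.snoc σ (τ (Fin.last (n + 1))), ?_, Fin.snoc_last _ _, fun i => ?_⟩
      · rwa [← Fin.castSucc_zero, Fin.snoc_castSucc]
      · induction i using Fin.lastCases with
        | last =>
          simpa only [Fin.snoc_castSucc, Fin.succ_last, Nat.succ_eq_add_one, Fin.snoc_last, hσk,
            Fin.init] using hpi
        | cast j => rw [Fin.succ_castSucc, Fin.snoc_castSucc, Fin.snoc_castSucc]; exact hσ j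

theorem partialPiProperty_of_stutteringSeries {H : Subgroup G} {n : ℕ}
    (τ : Fin (n + 1) → Subgroup G) (h0 : τ 0 = ⊥) (htop : τ (Fin.last n) = ⊤)
    (hstep : ∀ i : Fin n, τ i.succ = τ i.castSucc ∨ IsPiChiefFactor H (τ i.castSucc) (τ i.succ)) :
    PartialPiProperty H := by
  obtain ⟨k, σ, hσ0, hσk, hσ⟩ := exists_piSeries_of_stutteringSeries H τ h0 hstep
  exact ⟨k, σ, ⟨hσ0, hσk.trans htop, fun i => (hσ i).1⟩, fun i => (hσ i).2⟩

end PiProperty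

theorem stmt17_general {G : Type*} [Group G]
    (H N : Subgroup G) [hN : N.Normal]
    (hcond : N ≤ H ∨ Nat.Coprime (Nat.card H) (Nat.card N))
    (h : PartialPiProperty H) :
    PartialPiProperty (H.map (QuotientGroup.mk' N)) := by
  obtain ⟨n, σ, ⟨hσ0, hσn, hσ⟩, hindex⟩ := h
  have hf := QuotientGroup.mk'_surjective N
  refine partialPiProperty_of_stutteringSeries (fun i => (σ i).map (QuotientGroup.mk' N))
    (by simp [hσ0]) (by simp [hσn, map_top_of_surjective _ hf]) fun i => ?_
  by_cases hKL : (σ i.castSucc).map (QuotientGroup.mk' N) = (σ i.succ).map (QuotientGroup.mk' N)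
  · exact Or.inl hKL.symm
  · have hL : (σ i.succ).Normal := (hσ i).2.1
    refine Or.inr (IsPiChiefFactor.map hf ?_ ⟨hσ i, hindex i⟩ hKL)
    rw [QuotientGroup.ker_mk']
    exact inf_sup_le_inf_sup_of_le_or_coprime hcond

theorem stmt17 {G : Type*} [Group G] [Finite G]
    (H N : Subgroup G) [hN : N.Normal]
    (hcond : N ≤ H ∨ Nat.Coprime (Nat.card H) (Nat.card N))
    (h : PartialPiProperty H) :
    PartialPiProperty (H.map (QuotientGroup.mk' N)) :=
  stmt17_general H N (hN := hN) hcond h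
end
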